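/- Let a₁,…,a_k be nonzero vectors in ℝⁿ, let L be their linear span, let A = (1/k)·Σᵢ aᵢaᵢᵀ/|aᵢ|², and let λ be the smallest positive eigenvalue of A. For x ∈ ℝⁿ, let y and z denote the orthogonal projections of x onto Lᗮ and L respectively. Let i₁, i₂, … be independent random indices, each uniformly distributed on {1,…,k}, and define the random sequence X⁰ = x and X^{t+1} = X^t − (a_{i_{t+1}}ᵀX^t/|a_{i_{t+1}}|²)·a_{i_{t+1}}. Then for every t ≥ 0, 𝔼(|X^t − y|²) ≤ (1 − λ)^t · |z|². -/

import Mathlib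

open Matrix MeasureTheory ProbabilityTheory
open scoped RealInnerProductSpace ENNReal

/-!
Write `Pᵢ` for the orthogonal projection onto the line `ℝ aᵢ`, so that `A = (1/k) Σ Pᵢ` and one
step of the process is `X ↦ X - Pᵢ X`, the projection onto `aᵢᗮ`. The error `Xᵗ - y` stays in `L`
and is itself moved by these projections, since `y ⊥ L`. By Pythagoras, averaging over the
uniform index gives `(1/k) Σ ‖u - Pᵢ u‖² = ‖u‖² - ⟪u, A u⟫`, and for `u ∈ L ⊆ (ker A)ᗮ` the
spectral theorem gives `⟪u, A u⟫ ≥ λ ‖u‖²`. As `Xᵗ` depends only on the first `t` indices, it is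
independent of the next one, so the expected squared error shrinks by `1 - λ` at each step.
-/

section InnerProductSpace

variable {E : Type*} [NormedAddCommGroup E] [InnerProductSpace ℝ E]

theorem LinearMap.IsSymmetric.mul_norm_sq_le_inner_map_self [FiniteDimensional ℝ E]
    {T : E →ₗ[ℝ] E} (hT : T.IsSymmetric) (hT_nonneg : ∀ v, 0 ≤ ⟪v, T v⟫) {c : ℝ}
    (hc : ∀ μ, 0 < μ → Module.End.HasEigenvalue T μ → c ≤ μ)
    {u : E} (hu : u ∈ (LinearMap.ker T)ᗮ) :
    c * ‖u‖ ^ 2 ≤ ⟪u, T u⟫ := by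
  set b := hT.eigenvectorBasis rfl
  set μ := hT.eigenvalues rfl
  have hb : ∀ i, T (b i) = μ i • b i := hT.apply_eigenvectorBasis rfl
  have hTu : ⟪u, T u⟫ = ∑ i, μ i * ⟪b i, u⟫ ^ 2 := by
    rw [← b.sum_inner_mul_inner]
    refine Finset.sum_congr rfl fun i _ => ?_
    rw [← hT, hb, real_inner_smul_left, real_inner_comm]
    ring
  rw [hTu, ← b.sum_sq_inner_right, Finset.mul_sum]
  refine Finset.sum_le_sum fun i _ => ?_
  rcases eq_or_ne ⟪b i, u⟫ 0 with h0 | hne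
  · simp [h0]
  have hμ_nonneg : 0 ≤ μ i := by
    simpa [hb, real_inner_smul_right, b.orthonormal.1 i] using hT_nonneg (b i)
  -- an eigenvector for the eigenvalue `0` lies in `ker T`, hence is orthogonal to `u`
  have hμ_ne : μ i ≠ 0 := by
    intro h
    refine hne (Submodule.inner_right_of_mem_orthogonal ?_ hu)
    simp [hb, h]
  exact mul_le_mul_of_nonneg_right
    (hc _ (lt_of_le_of_ne hμ_nonneg hμ_ne.symm) (hT.hasEigenvalue_eigenvalues rfl i)) (sq_nonneg _)

theorem Submodule.inner_starProjection_self (U : Submodule ℝ E) [U.HasOrthogonalProjection]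
    (u : E) :
    ⟪u, U.starProjection u⟫ = ‖U.starProjection u‖ ^ 2 := by
  rw [← real_inner_self_eq_norm_sq, U.inner_starProjection_left_eq_right,
    U.starProjection_eq_self_iff.2 (U.starProjection_apply_mem u)]

theorem Submodule.starProjection_orthogonal_singleton (v w : E) :
    (ℝ ∙ v)ᗮ.starProjection w = w - (⟪v, w⟫ / ‖v‖ ^ 2) • v := by
  rw [starProjection_orthogonal_val, starProjection_singleton]
  rfl

theorem Submodule.starProjection_orthogonal_mem_of_le {K L : Submodule ℝ E}
    [K.HasOrthogonalProjection] (hKL : K ≤ L) {u : E} (hu : u ∈ L) : Kᗮ.starProjection u ∈ L := by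
  rw [starProjection_orthogonal_val]
  exact L.sub_mem hu (hKL (K.starProjection_apply_mem u))

section AverageProjection

variable {ι : Type*} [Fintype ι] (K : ι → Submodule ℝ E) [∀ i, (K i).HasOrthogonalProjection]

noncomputable def averageProjection : E →ₗ[ℝ] E :=
  (Fintype.card ι : ℝ)⁻¹ • ∑ i, ((K i).starProjection : E →ₗ[ℝ] E)

theorem averageProjection_apply (u : E) :
    averageProjection K u = (Fintype.card ι : ℝ)⁻¹ • ∑ i, (K i).starProjection u := by
  simp [averageProjection]

theorem isSymmetric_averageProjection : (averageProjection K).IsSymmetric := by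
  intro u v
  simp only [averageProjection_apply, real_inner_smul_left, real_inner_smul_right, sum_inner,
    inner_sum, Submodule.inner_starProjection_left_eq_right]

theorem inner_averageProjection_self (u : E) :
    ⟪u, averageProjection K u⟫ = (Fintype.card ι : ℝ)⁻¹ * ∑ i, ‖(K i).starProjection u‖ ^ 2 := by
  simp only [averageProjection_apply, real_inner_smul_right, inner_sum,
    Submodule.inner_starProjection_self]

theorem inner_averageProjection_self_nonneg (u : E) : 0 ≤ ⟪u, averageProjection K u⟫ := by
  rw [inner_averageProjection_self]
  positivity

theorem iSup_le_orthogonal_ker_averageProjection :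
    ⨆ i, K i ≤ (LinearMap.ker (averageProjection K))ᗮ := by
  refine iSup_le fun i v hv => (Submodule.mem_orthogonal _ _).2 fun w hw => ?_
  have : Nonempty ι := ⟨i⟩
  have hsum : ∑ j, ‖(K j).starProjection w‖ ^ 2 = 0 := by
    have h := inner_averageProjection_self K w
    rw [LinearMap.mem_ker.1 hw, inner_zero_right, eq_comm, mul_eq_zero] at h
    exact h.resolve_left (inv_ne_zero (Nat.cast_ne_zero.2 Fintype.card_ne_zero))
  have hPw : (K i).starProjection w = 0 := by
    rw [Finset.sum_eq_zero_iff_of_nonneg fun _ _ => sq_nonneg _] at hsum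
    exact norm_eq_zero.1 ((pow_eq_zero_iff two_ne_zero).1 (hsum i (Finset.mem_univ i)))
  rw [real_inner_comm]
  exact Submodule.inner_right_of_mem_orthogonal hv ((K i).starProjection_apply_eq_zero_iff.1 hPw)

variable [Nonempty ι]

theorem average_norm_sq_orthogonal_starProjection (u : E) :
    (Fintype.card ι : ℝ)⁻¹ * ∑ i, ‖(K i)ᗮ.starProjection u‖ ^ 2 =
      ‖u‖ ^ 2 - ⟪u, averageProjection K u⟫ := by
  have hcard : (Fintype.card ι : ℝ) ≠ 0 := Nat.cast_ne_zero.2 Fintype.card_ne_zero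
  have hpyth : ∀ i, ‖(K i)ᗮ.starProjection u‖ ^ 2 = ‖u‖ ^ 2 - ‖(K i).starProjection u‖ ^ 2 :=
    fun i => by rw [Submodule.norm_sq_eq_add_norm_sq_starProjection u (K i)]; ring
  rw [inner_averageProjection_self, Finset.sum_congr rfl fun i _ => hpyth i,
    Finset.sum_sub_distrib, Finset.sum_const, Finset.card_univ, nsmul_eq_mul]
  field_simp

theorem le_one_of_hasEigenvalue_averageProjection {μ : ℝ}
    (hμ : Module.End.HasEigenvalue (averageProjection K) μ) : μ ≤ 1 := by
  obtain ⟨v, hv, hv0⟩ := hμ.exists_hasEigenvector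
  have hv_eq : μ * ‖v‖ ^ 2 =
      ‖v‖ ^ 2 - (Fintype.card ι : ℝ)⁻¹ * ∑ i, ‖(K i)ᗮ.starProjection v‖ ^ 2 := by
    rw [average_norm_sq_orthogonal_starProjection, Module.End.mem_eigenspace_iff.1 hv,
      real_inner_smul_right, real_inner_self_eq_norm_sq]
    ring
  have hv_pos : 0 < ‖v‖ ^ 2 := by positivity
  have : 0 ≤ (Fintype.card ι : ℝ)⁻¹ * ∑ i, ‖(K i)ᗮ.starProjection v‖ ^ 2 := by positivity
  exact le_of_mul_le_mul_right (by linarith) hv_pos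

theorem average_norm_sq_orthogonal_starProjection_le [FiniteDimensional ℝ E] {c : ℝ}
    (hc : ∀ μ, 0 < μ → Module.End.HasEigenvalue (averageProjection K) μ → c ≤ μ)
    {u : E} (hu : u ∈ ⨆ i, K i) :
    (Fintype.card ι : ℝ)⁻¹ * ∑ i, ‖(K i)ᗮ.starProjection u‖ ^ 2 ≤ (1 - c) * ‖u‖ ^ 2 := by
  have := (isSymmetric_averageProjection K).mul_norm_sq_le_inner_map_self
    (inner_averageProjection_self_nonneg K) hc (iSup_le_orthogonal_ker_averageProjection K hu)
  rw [average_norm_sq_orthogonal_starProjection]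
  linarith

end AverageProjection

end InnerProductSpace

theorem Matrix.hasEigenvalue_toEuclideanLin_iff {𝕜 m : Type*} [RCLike 𝕜] [Fintype m]
    [DecidableEq m] (A : Matrix m m 𝕜) (μ : 𝕜) :
    Module.End.HasEigenvalue (toEuclideanLin A) μ ↔ ∃ v, v ≠ 0 ∧ A *ᵥ v = μ • v := by
  constructor
  · intro h
    obtain ⟨v, hv, hv0⟩ := h.exists_hasEigenvector
    exact ⟨WithLp.ofLp v, by simpa using hv0,
      congrArg WithLp.ofLp (Module.End.mem_eigenspace_iff.1 hv)⟩
  · rintro ⟨v, hv0, hv⟩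
    exact Module.End.hasEigenvalue_of_hasEigenvector
      ⟨Module.End.mem_eigenspace_iff.2 (congrArg (WithLp.toLp 2) hv), by simpa using hv0⟩

theorem toEuclideanLin_eq_averageProjection {ι : Type*} [Fintype ι] {n : ℕ}
    (a : ι → EuclideanSpace ℝ (Fin n)) :
    toEuclideanLin ((1 / (Fintype.card ι : ℝ)) • ∑ i, (‖a i‖ ^ 2)⁻¹ • vecMulVec (a i) (a i)) =
      averageProjection fun i => ℝ ∙ a i := by
  ext u j
  simp only [averageProjection_apply, Submodule.starProjection_singleton, toLpLin_apply,
    smul_mulVec, sum_mulVec, vecMulVec_mulVec, EuclideanSpace.inner_eq_star_dotProduct]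
  simp [Finset.mul_sum, dotProduct_comm, mul_assoc, div_eq_inv_mul]

theorem ProbabilityTheory.IndepFun.integral_comp_eq_sum {Ω β ι : Type*} [MeasurableSpace Ω]
    {μ : Measure Ω} [IsProbabilityMeasure μ] [MeasurableSpace β] [Fintype ι] [MeasurableSpace ι]
    [MeasurableSingletonClass ι] {Y : Ω → β} {I : Ω → ι} (hYI : IndepFun Y I μ)
    (hY : Measurable Y) (hI : Measurable I) {f : ι → β → ℝ} (hf : ∀ j, Measurable (f j))
    (hfY : ∀ j, Integrable (fun ω => f j (Y ω)) μ) :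
    ∫ ω, f (I ω) (Y ω) ∂μ = ∑ j, μ.real {ω | I ω = j} * ∫ ω, f j (Y ω) ∂μ := by
  have hset : ∀ j, MeasurableSet {ω | I ω = j} := fun j => hI (measurableSet_singleton j)
  have hdecomp : ∀ ω, f (I ω) (Y ω) = ∑ j, {ω | I ω = j}.indicator (fun ω => f j (Y ω)) ω := by
    classical
    simp [Set.indicator_apply, Finset.sum_ite_eq]
  simp_rw [hdecomp]
  rw [integral_finsetSum _ fun j _ => (hfY j).indicator (hset j)]
  refine Finset.sum_congr rfl fun j _ => ?_
  rw [integral_indicator (hset j)]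
  exact Indep.setIntegral_eq_mul (measurable_iff_comap_le.1 hI)
    ((IndepFun_iff_Indep _ _ _).1 hYI.symm) hY.aemeasurable
    ⟨{j}, measurableSet_singleton j, rfl⟩ (hf j).aestronglyMeasurable

section RandomIteration

variable {Ω E ι : Type*} (F : ι → E → E) (idx : ℕ → Ω → ι) (X : ℕ → Ω → E) {x₀ : E}

theorem exists_eq_comp_of_iterate (hX0 : ∀ ω, X 0 ω = x₀)
    (hX : ∀ t ω, X (t + 1) ω = F (idx (t + 1) ω) (X t ω)) (t : ℕ) :
    ∃ G : (Finset.Iic t → ι) → E, ∀ ω, X t ω = G fun s => idx s ω := by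
  induction t with
  | zero => exact ⟨fun _ => x₀, hX0⟩
  | succ t ih =>
    obtain ⟨G, hG⟩ := ih
    refine ⟨fun g => F (g ⟨t + 1, by simp⟩) (G fun s => g ⟨s, ?_⟩), fun ω => by rw [hX, hG]⟩
    exact Finset.mem_Iic.2 ((Finset.mem_Iic.1 s.2).trans t.le_succ)

theorem integral_iterate_le_pow_mul [MeasurableSpace Ω] {μ : Measure Ω} [IsProbabilityMeasure μ]
    [Fintype ι] [MeasurableSpace ι] [MeasurableSingletonClass ι]
    (V : E → ℝ) {S : Set E} (hF : ∀ j, Set.MapsTo (F j) S S) {ρ : ℝ} (hρ : 0 ≤ ρ)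
    (hV : ∀ x ∈ S, (Fintype.card ι : ℝ)⁻¹ * ∑ j, V (F j x) ≤ ρ * V x)
    (hmeas : ∀ t, Measurable (idx t)) (hindep : iIndepFun idx μ)
    (hunif : ∀ t j, μ {ω | idx t ω = j} = (Fintype.card ι : ℝ≥0∞)⁻¹)
    (hx₀ : x₀ ∈ S) (hX0 : ∀ ω, X 0 ω = x₀)
    (hX : ∀ t ω, X (t + 1) ω = F (idx (t + 1) ω) (X t ω)) (t : ℕ) :
    ∫ ω, V (X t ω) ∂μ ≤ ρ ^ t * V x₀ := by
  have hS : ∀ t ω, X t ω ∈ S := by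
    intro t ω
    induction t with
    | zero => exact hX0 ω ▸ hx₀
    | succ t ih => exact hX t ω ▸ hF _ ih
  induction t with
  | zero => simp [hX0]
  | succ t ih =>
    obtain ⟨G, hG⟩ := exists_eq_comp_of_iterate F idx X hX0 hX t
    let past : Ω → (Finset.Iic t → ι) := fun ω s => idx s ω
    have hXt : ∀ ω, X t ω = G (past ω) := hG
    have hpast : Measurable past := measurable_pi_lambda _ fun s => hmeas s
    have hindep_past : IndepFun past (idx (t + 1)) μ :=
      (hindep.indepFun_finset (Finset.Iic t) {t + 1} (by simp) hmeas).comp measurable_id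
        (measurable_pi_apply (⟨t + 1, Finset.mem_singleton_self _⟩ : ({t + 1} : Finset ℕ)))
    -- `past` takes finitely many values
    have hint : ∀ g : (Finset.Iic t → ι) → ℝ, Integrable (fun ω => g (past ω)) μ :=
      fun g => Integrable.of_finite.comp_measurable hpast
    calc ∫ ω, V (X (t + 1) ω) ∂μ
        = ∑ j, μ.real {ω | idx (t + 1) ω = j} * ∫ ω, V (F j (G (past ω))) ∂μ := by
          simp_rw [hX, hXt]
          exact hindep_past.integral_comp_eq_sum (f := fun j p => V (F j (G p))) hpast (hmeas _)
            (fun _ => measurable_of_countable _) fun j => hint fun p => V (F j (G p))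
      _ = ∫ ω, (Fintype.card ι : ℝ)⁻¹ * ∑ j, V (F j (G (past ω))) ∂μ := by
        rw [integral_const_mul, integral_finsetSum _ fun j _ => hint fun p => V (F j (G p)),
          Finset.mul_sum]
        simp [measureReal_def, hunif]
      _ ≤ ∫ ω, ρ * V (G (past ω)) ∂μ :=
        integral_mono (hint fun p => _ * ∑ j, V (F j (G p))) (hint fun p => ρ * V (G p))
          fun ω => hV _ (hXt ω ▸ hS t ω)
      _ = ρ * ∫ ω, V (X t ω) ∂μ := by simp_rw [hXt]; exact integral_const_mul _ _
      _ ≤ ρ * (ρ ^ t * V x₀) := by gcongr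
      _ = ρ ^ (t + 1) * V x₀ := by ring

end RandomIteration

theorem stmt8 {n k : ℕ} (hk : 0 < k) (a : Fin k → EuclideanSpace ℝ (Fin n))
    (L : Submodule ℝ (EuclideanSpace ℝ (Fin n)))
    (hL : L = Submodule.span ℝ (Set.range a))
    (A : Matrix (Fin n) (Fin n) ℝ)
    (hA : A = (1 / (k : ℝ)) • ∑ i, (‖a i‖ ^ 2)⁻¹ • vecMulVec (a i) (a i))
    (lam : ℝ)
    (hlam_eig : ∃ v : Fin n → ℝ, v ≠ 0 ∧ A.mulVec v = lam • v)
    (hlam_min : ∀ mu : ℝ, 0 < mu → (∃ v : Fin n → ℝ, v ≠ 0 ∧ A.mulVec v = mu • v) →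
      lam ≤ mu)
    (x : EuclideanSpace ℝ (Fin n))
    {Ω : Type*} [MeasurableSpace Ω] (μ : Measure Ω) [IsProbabilityMeasure μ]
    (idx : ℕ → Ω → Fin k) (hmeas : ∀ t, Measurable (idx t))
    (hindep : iIndepFun (m := fun _ : ℕ => (inferInstance : MeasurableSpace (Fin k))) idx μ)
    (hunif : ∀ t (j : Fin k), μ {ω | idx t ω = j} = (k : ℝ≥0∞)⁻¹)
    (X : ℕ → Ω → EuclideanSpace ℝ (Fin n))
    (hX0 : ∀ ω, X 0 ω = x)
    (hXsucc : ∀ t ω, X (t + 1) ω =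
      X t ω - (⟪a (idx (t + 1) ω), X t ω⟫ / ‖a (idx (t + 1) ω)‖ ^ 2) • a (idx (t + 1) ω)) :
    ∀ t : ℕ,
      ∫ ω, ‖X t ω - (Submodule.orthogonalProjectionOnto Lᗮ x : EuclideanSpace ℝ (Fin n))‖ ^ 2 ∂μ ≤
        (1 - lam) ^ t * ‖(Submodule.orthogonalProjectionOnto L x : EuclideanSpace ℝ (Fin n))‖ ^ 2 := by
  have : Nonempty (Fin k) := ⟨⟨0, hk⟩⟩
  have hT : toEuclideanLin A = averageProjection fun i => ℝ ∙ a i := by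
    simpa [hA] using toEuclideanLin_eq_averageProjection a
  have hLK : L = ⨆ i, ℝ ∙ a i := hL.trans Submodule.span_range_eq_iSup
  have hKL : ∀ i, (ℝ ∙ a i) ≤ L := fun i => hLK ▸ le_iSup (fun i => ℝ ∙ a i) i
  have hc (μ : ℝ) (hμ : 0 < μ)
      (h : Module.End.HasEigenvalue (averageProjection fun i => ℝ ∙ a i) μ) : lam ≤ μ :=
    hlam_min μ hμ ((hasEigenvalue_toEuclideanLin_iff A μ).1 (hT ▸ h))
  have hlam_le_one : lam ≤ 1 := le_one_of_hasEigenvalue_averageProjection _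
    (hT ▸ (hasEigenvalue_toEuclideanLin_iff A lam).2 hlam_eig)
  have hy : ∀ i, (ℝ ∙ a i)ᗮ.starProjection (Lᗮ.starProjection x) = Lᗮ.starProjection x :=
    fun i => Submodule.starProjection_eq_self_iff.2 <|
      Submodule.orthogonal_le (hKL i) (Lᗮ.starProjection_apply_mem x)
  have hstep : ∀ t ω, X (t + 1) ω - Lᗮ.starProjection x =
      (ℝ ∙ a (idx (t + 1) ω))ᗮ.starProjection (X t ω - Lᗮ.starProjection x) := fun t ω => by
    rw [map_sub, hy, hXsucc, Submodule.starProjection_orthogonal_singleton]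
  have hz : x - Lᗮ.starProjection x = L.starProjection x := by
    rw [Submodule.starProjection_orthogonal_val, sub_sub_cancel]
  intro t
  simpa only [Submodule.starProjection_apply] using
    integral_iterate_le_pow_mul (fun i => (ℝ ∙ a i)ᗮ.starProjection) idx
      (fun t ω => X t ω - Lᗮ.starProjection x) (fun u => ‖u‖ ^ 2)
      (fun i _ hu => Submodule.starProjection_orthogonal_mem_of_le (hKL i) hu)
      (sub_nonneg.2 hlam_le_one)
      (fun u hu => average_norm_sq_orthogonal_starProjection_le _ hc (hLK ▸ hu))
      hmeas hindep (by simpa using hunif) (L.starProjection_apply_mem x)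
      (fun ω => by rw [hX0, hz]) hstep t
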